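/- arXiv:2206.02898 — 5 statements merged into one kernel-verified Lean document; each statement's English description precedes it below -/
import Mathlib

section
/- For all α, β > 0, x₁, x₂ ∈ ℝ, and all (x,t) ∈ ℝ², the breather and its primitive satisfy the identity ∂_x² B̃_{α,β}(x,t;x₁,x₂) + ∂_t 𝔅_{α,β}(x,t) + B̃_{α,β}(x,t;x₁,x₂)³ = 0. -/
open Real Filter MeasureTheory

/-- The mKdV breather `B̃_{α,β}(x,t;x₁,x₂)`, with
`y₁ = x + (α² − 3β²)t + x₁` and `y₂ = x + (3α² − β²)t + x₂`. -/
noncomputable def breather (α β x₁ x₂ x t : ℝ) : ℝ :=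
  2 * Real.sqrt 2 * β * (1 / Real.cosh (β * (x + (3*α^2 - β^2)*t + x₂))) *
      ((Real.cos (α * (x + (α^2 - 3*β^2)*t + x₁)) -
        (β/α) * Real.sin (α * (x + (α^2 - 3*β^2)*t + x₁)) *
          Real.tanh (β * (x + (3*α^2 - β^2)*t + x₂))) /
        (1 + (β/α)^2 * (Real.sin (α * (x + (α^2 - 3*β^2)*t + x₁)))^2 *
          (1 / Real.cosh (β * (x + (3*α^2 - β^2)*t + x₂)))^2))

/-- The breather primitive `𝔅_{α,β}(x,t) = 2√2 arctan((β/α) sin(α y₁)/cosh(β y₂))`. -/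
noncomputable def breatherPrim (α β x₁ x₂ x t : ℝ) : ℝ :=
  2 * Real.sqrt 2 * Real.arctan ((β/α) * Real.sin (α * (x + (α^2 - 3*β^2)*t + x₁)) /
    Real.cosh (β * (x + (3*α^2 - β^2)*t + x₂)))

/-!
With `u = (β/α) sin(α y₁) sech(β y₂)` one has `𝔅 = 2√2 arctan u` and `B̃ = 2√2 u_x / (1 + u²)`,
and the identity becomes `(1 + u²)(u_xxx + u_t) + 6 u_x (u_x² - u u_xx) = 0`. In the variables
`s, c, T, w = sin(α y₁), cos(α y₁), tanh(β y₂), sech(β y₂)` every derivative of `u` is a polynomial,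
and using `s² + c² = 1` and `T² + w² = 1` one finds `u_x² - u u_xx = β² w² (1 + u²)` and, thanks to
the speeds `δ, γ`, `u_xxx + u_t = -6 β² w² u_x`.
-/

namespace Real

theorem hasDerivAt_tanh (x : ℝ) : HasDerivAt tanh ((cosh x)⁻¹ ^ 2) x := by
  rw [show tanh = sinh / cosh from funext tanh_eq_sinh_div_cosh]
  refine ((hasDerivAt_sinh x).div (hasDerivAt_cosh x) (cosh_pos x).ne').congr_deriv ?_
  field_simp
  linear_combination cosh_sq x

theorem hasDerivAt_inv_cosh (x : ℝ) :
    HasDerivAt (fun y => (cosh y)⁻¹) (-(tanh x * (cosh x)⁻¹)) x := by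
  refine ((hasDerivAt_cosh x).inv (cosh_pos x).ne').congr_deriv ?_
  rw [tanh_eq_sinh_div_cosh]
  field_simp

theorem tanh_sq_add_inv_cosh_sq (x : ℝ) : tanh x ^ 2 + (cosh x)⁻¹ ^ 2 = 1 := by
  rw [tanh_eq_sinh_div_cosh]
  field_simp
  linear_combination -cosh_sq x

end Real

theorem iteratedDeriv_two_div_one_add_sq {u u₁ u₂ : ℝ → ℝ} {x u₃ : ℝ}
    (hu : ∀ z, HasDerivAt u (u₁ z) z) (hu₁ : ∀ z, HasDerivAt u₁ (u₂ z) z)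
    (hu₂ : HasDerivAt u₂ u₃ x) :
    iteratedDeriv 2 (fun z => u₁ z / (1 + u z ^ 2)) x =
      ((1 + u x ^ 2) * (u₃ * (1 + u x ^ 2) - 6 * u x * u₁ x * u₂ x - 2 * u₁ x ^ 3)
        + 8 * u x ^ 2 * u₁ x ^ 3) / (1 + u x ^ 2) ^ 3 := by
  have hpos : ∀ z, 1 + u z ^ 2 ≠ 0 := fun z => by positivity
  have hD : ∀ z, HasDerivAt (fun z => 1 + u z ^ 2) (2 * u z * u₁ z) z := fun z => by
    simpa using ((hu z).pow 2).const_add 1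
  have h₁ : deriv (fun z => u₁ z / (1 + u z ^ 2)) =
      fun z => (u₂ z * (1 + u z ^ 2) - 2 * u z * u₁ z ^ 2) / (1 + u z ^ 2) ^ 2 := by
    funext z
    rw [((hu₁ z).fun_div (hD z) (hpos z)).deriv]
    ring
  have h₂ : HasDerivAt (fun z => (u₂ z * (1 + u z ^ 2) - 2 * u z * u₁ z ^ 2) / (1 + u z ^ 2) ^ 2)
      (((1 + u x ^ 2) * (u₃ * (1 + u x ^ 2) - 6 * u x * u₁ x * u₂ x - 2 * u₁ x ^ 3)
        + 8 * u x ^ 2 * u₁ x ^ 3) / (1 + u x ^ 2) ^ 3) x := by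
    refine (((hu₂.mul (hD x)).sub (((hu x).const_mul 2).mul ((hu₁ x).pow 2))).div
      ((hD x).pow 2) (pow_ne_zero 2 (hpos x))).congr_deriv ?_
    have hx := hpos x
    simp only [Pi.mul_apply, Pi.sub_apply, Pi.pow_apply]
    field_simp
    ring
  rw [iteratedDeriv_succ, iteratedDeriv_one, h₁, h₂.deriv]

theorem arctan_potential_second_order_identity {u u₁ u₂ : ℝ → ℝ} {x u₃ v : ℝ}
    (hu : ∀ z, HasDerivAt u (u₁ z) z) (hu₁ : ∀ z, HasDerivAt u₁ (u₂ z) z)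
    (hu₂ : HasDerivAt u₂ u₃ x)
    (hpot : (1 + u x ^ 2) * (u₃ + v) + 6 * u₁ x * (u₁ x ^ 2 - u x * u₂ x) = 0) :
    iteratedDeriv 2 (fun z => 2 * √2 * (u₁ z / (1 + u z ^ 2))) x + 2 * √2 * (v / (1 + u x ^ 2))
      + (2 * √2 * (u₁ x / (1 + u x ^ 2))) ^ 3 = 0 := by
  have hcube : ∀ q : ℝ, (2 * √2 * q) ^ 3 = 2 * √2 * (8 * q ^ 3) := fun q => by
    linear_combination (8 * √2 * q ^ 3) * Real.sq_sqrt (show (0 : ℝ) ≤ 2 by norm_num)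
  rw [iteratedDeriv_const_mul_field, iteratedDeriv_two_div_one_add_sq hu hu₁ hu₂, hcube,
    ← mul_add, ← mul_add]
  refine mul_eq_zero_of_right _ ?_
  have hx : 1 + u x ^ 2 ≠ 0 := by positivity
  field_simp
  linear_combination (1 + u x ^ 2) * hpot

/-- `(S, C, T, W)` behave at `z` like `(sin θ, cos θ, tanh η, sech η)` for phases with `θ' = a` and
`η' = b`; the derivatives of `S · W` are then polynomials in `S, C, T, W`. -/
structure TrigHypFrameAt (a b : ℝ) (S C T W : ℝ → ℝ) (z : ℝ) : Prop where
  hasDerivAt_sin : HasDerivAt S (a * C z) z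
  hasDerivAt_cos : HasDerivAt C (-(a * S z)) z
  hasDerivAt_tanh : HasDerivAt T (b * W z ^ 2) z
  hasDerivAt_sech : HasDerivAt W (-(b * (T z * W z))) z

/- The first three derivatives of `sin θ · sech η` along such a frame, in the variables
`s, c, T, w = sin θ, cos θ, tanh η, sech η`. -/

def sinSechDeriv₁ (a b s c T w : ℝ) : ℝ := w * (a * c - b * s * T)

def sinSechDeriv₂ (a b s c T w : ℝ) : ℝ :=
  w * (b ^ 2 * s * (T ^ 2 - w ^ 2) - a ^ 2 * s - 2 * a * b * c * T)

def sinSechDeriv₃ (a b s c T w : ℝ) : ℝ :=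
  w * (3 * a * b ^ 2 * c * (T ^ 2 - w ^ 2) - a ^ 3 * c + b ^ 3 * s * T * (5 * w ^ 2 - T ^ 2)
    + 3 * a ^ 2 * b * s * T)

namespace TrigHypFrameAt

variable {a b z : ℝ} {S C T W : ℝ → ℝ}

theorem of_phases {θ η : ℝ → ℝ} (hθ : HasDerivAt θ a z) (hη : HasDerivAt η b z) :
    TrigHypFrameAt a b (fun z => sin (θ z)) (fun z => cos (θ z)) (fun z => tanh (η z))
      (fun z => (cosh (η z))⁻¹) z where
  hasDerivAt_sin := hθ.sin.congr_deriv (mul_comm _ _)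
  hasDerivAt_cos := hθ.cos.congr_deriv (by ring)
  hasDerivAt_tanh := ((Real.hasDerivAt_tanh (η z)).comp z hη).congr_deriv (mul_comm _ _)
  hasDerivAt_sech := ((Real.hasDerivAt_inv_cosh (η z)).comp z hη).congr_deriv (by ring)

theorem hasDerivAt_sin_mul_sech (hF : TrigHypFrameAt a b S C T W z) :
    HasDerivAt (fun z => S z * W z) (sinSechDeriv₁ a b (S z) (C z) (T z) (W z)) z :=
  (hF.hasDerivAt_sin.mul hF.hasDerivAt_sech).congr_deriv (by unfold sinSechDeriv₁; ring)

theorem hasDerivAt_sinSechDeriv₁ (hF : TrigHypFrameAt a b S C T W z) :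
    HasDerivAt (fun z => sinSechDeriv₁ a b (S z) (C z) (T z) (W z))
      (sinSechDeriv₂ a b (S z) (C z) (T z) (W z)) z := by
  obtain ⟨hS, hC, hT, hW⟩ := hF
  unfold sinSechDeriv₁
  exact (hW.mul ((hC.const_mul a).sub ((hS.const_mul b).mul hT))).congr_deriv
    (by unfold sinSechDeriv₂; simp only [Pi.mul_apply, Pi.sub_apply]; ring)

theorem hasDerivAt_sinSechDeriv₂ (hF : TrigHypFrameAt a b S C T W z) :
    HasDerivAt (fun z => sinSechDeriv₂ a b (S z) (C z) (T z) (W z))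
      (sinSechDeriv₃ a b (S z) (C z) (T z) (W z)) z := by
  obtain ⟨hS, hC, hT, hW⟩ := hF
  unfold sinSechDeriv₂
  exact (hW.mul ((((hS.const_mul (b ^ 2)).mul ((hT.pow 2).sub (hW.pow 2))).sub
    (hS.const_mul (a ^ 2))).sub ((hC.const_mul (2 * a * b)).mul hT))).congr_deriv
    (by unfold sinSechDeriv₃; simp only [Pi.mul_apply, Pi.sub_apply, Pi.pow_apply]; ring)

end TrigHypFrameAt

theorem sinSechDeriv₃_add_sinSechDeriv₁ (a b s c T w : ℝ) (hTw : T ^ 2 + w ^ 2 = 1) :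
    sinSechDeriv₃ a b s c T w
        + sinSechDeriv₁ (a * (a ^ 2 - 3 * b ^ 2)) (b * (3 * a ^ 2 - b ^ 2)) s c T w
      = -(6 * b ^ 2 * w ^ 2 * sinSechDeriv₁ a b s c T w) := by
  unfold sinSechDeriv₁ sinSechDeriv₃
  linear_combination (3 * a * b ^ 2 * c * w - b ^ 3 * s * T * w) * hTw

theorem sinSechDeriv₁_sq_sub (a b s c T w : ℝ) (ha : a ≠ 0) (hsc : s ^ 2 + c ^ 2 = 1) :
    (b / a * sinSechDeriv₁ a b s c T w) ^ 2
        - b / a * (s * w) * (b / a * sinSechDeriv₂ a b s c T w)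
      = b ^ 2 * w ^ 2 * (1 + (b / a * (s * w)) ^ 2) := by
  unfold sinSechDeriv₁ sinSechDeriv₂
  field_simp
  linear_combination a ^ 2 * b ^ 2 * w ^ 2 * hsc

theorem sinSech_potential_identity (a b s c T w : ℝ) (ha : a ≠ 0) (hsc : s ^ 2 + c ^ 2 = 1)
    (hTw : T ^ 2 + w ^ 2 = 1) :
    (1 + (b / a * (s * w)) ^ 2) * (b / a * sinSechDeriv₃ a b s c T w
        + b / a * sinSechDeriv₁ (a * (a ^ 2 - 3 * b ^ 2)) (b * (3 * a ^ 2 - b ^ 2)) s c T w)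
      + 6 * (b / a * sinSechDeriv₁ a b s c T w) * ((b / a * sinSechDeriv₁ a b s c T w) ^ 2
        - b / a * (s * w) * (b / a * sinSechDeriv₂ a b s c T w)) = 0 := by
  rw [sinSechDeriv₁_sq_sub a b s c T w ha hsc, ← mul_add,
    sinSechDeriv₃_add_sinSechDeriv₁ a b s c T w hTw]
  ring

def breatherPhase₁ (α β x₁ x t : ℝ) : ℝ := α * (x + (α ^ 2 - 3 * β ^ 2) * t + x₁)

def breatherPhase₂ (α β x₂ x t : ℝ) : ℝ := β * (x + (3 * α ^ 2 - β ^ 2) * t + x₂)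

section Breather

variable (α β x₁ x₂ : ℝ)

theorem hasDerivAt_breatherPhase₁_x (x t : ℝ) : HasDerivAt (breatherPhase₁ α β x₁ · t) α x := by
  unfold breatherPhase₁
  simpa using (((hasDerivAt_id x).add_const _).add_const x₁).const_mul α

theorem hasDerivAt_breatherPhase₂_x (x t : ℝ) : HasDerivAt (breatherPhase₂ α β x₂ · t) β x := by
  unfold breatherPhase₂
  simpa using (((hasDerivAt_id x).add_const _).add_const x₂).const_mul β

theorem hasDerivAt_breatherPhase₁_t (x t : ℝ) :
    HasDerivAt (breatherPhase₁ α β x₁ x) (α * (α ^ 2 - 3 * β ^ 2)) t := by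
  unfold breatherPhase₁
  simpa using ((((hasDerivAt_id t).const_mul _).const_add x).add_const x₁).const_mul α

theorem hasDerivAt_breatherPhase₂_t (x t : ℝ) :
    HasDerivAt (breatherPhase₂ α β x₂ x) (β * (3 * α ^ 2 - β ^ 2)) t := by
  unfold breatherPhase₂
  simpa using ((((hasDerivAt_id t).const_mul _).const_add x).add_const x₂).const_mul β

theorem breather_eq_sinSechDeriv₁ (hα : α ≠ 0) (x t : ℝ) :
    breather α β x₁ x₂ x t = 2 * √2 *
      (β / α * sinSechDeriv₁ α β (sin (breatherPhase₁ α β x₁ x t))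
          (cos (breatherPhase₁ α β x₁ x t)) (tanh (breatherPhase₂ α β x₂ x t))
          (cosh (breatherPhase₂ α β x₂ x t))⁻¹ /
        (1 + (β / α * (sin (breatherPhase₁ α β x₁ x t) *
          (cosh (breatherPhase₂ α β x₂ x t))⁻¹)) ^ 2)) := by
  unfold breather sinSechDeriv₁ breatherPhase₁ breatherPhase₂
  field_simp

theorem hasDerivAt_breatherPrim (x t : ℝ) :
    HasDerivAt (breatherPrim α β x₁ x₂ x) (2 * √2 *
      (β / α * sinSechDeriv₁ (α * (α ^ 2 - 3 * β ^ 2)) (β * (3 * α ^ 2 - β ^ 2))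
          (sin (breatherPhase₁ α β x₁ x t)) (cos (breatherPhase₁ α β x₁ x t))
          (tanh (breatherPhase₂ α β x₂ x t)) (cosh (breatherPhase₂ α β x₂ x t))⁻¹ /
        (1 + (β / α * (sin (breatherPhase₁ α β x₁ x t) *
          (cosh (breatherPhase₂ α β x₂ x t))⁻¹)) ^ 2))) t := by
  have hF := TrigHypFrameAt.of_phases (hasDerivAt_breatherPhase₁_t α β x₁ x t)
    (hasDerivAt_breatherPhase₂_t α β x₂ x t)
  have hprim : breatherPrim α β x₁ x₂ x = fun τ => 2 * √2 *
      arctan (β / α * (sin (breatherPhase₁ α β x₁ x τ) * (cosh (breatherPhase₂ α β x₂ x τ))⁻¹)) := by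
    funext τ
    rw [breatherPrim, mul_div_assoc, div_eq_mul_inv (sin _)]
    rfl
  rw [hprim]
  exact (((hF.hasDerivAt_sin_mul_sech.const_mul (β / α)).arctan).const_mul (2 * √2)).congr_deriv
    (by ring)

end Breather

theorem breather_second_order_identity_general (α β x₁ x₂ : ℝ) (hα : 0 < α) :
    ∀ x t : ℝ,
      iteratedDeriv 2 (fun y => breather α β x₁ x₂ y t) x +
        deriv (fun τ => breatherPrim α β x₁ x₂ x τ) t +
        (breather α β x₁ x₂ x t) ^ 3 = 0 := by
  intro x t
  have hF := fun y => TrigHypFrameAt.of_phases (hasDerivAt_breatherPhase₁_x α β x₁ y t)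
    (hasDerivAt_breatherPhase₂_x α β x₂ y t)
  rw [funext (breather_eq_sinSechDeriv₁ α β x₁ x₂ hα.ne' · t),
    breather_eq_sinSechDeriv₁ α β x₁ x₂ hα.ne' x t, (hasDerivAt_breatherPrim α β x₁ x₂ x t).deriv]
  refine arctan_potential_second_order_identity
    (fun y => (hF y).hasDerivAt_sin_mul_sech.const_mul (β / α))
    (fun y => (hF y).hasDerivAt_sinSechDeriv₁.const_mul (β / α))
    ((hF x).hasDerivAt_sinSechDeriv₂.const_mul (β / α)) ?_
  exact sinSech_potential_identity α β _ _ _ _ hα.ne' (sin_sq_add_cos_sq _)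
    (tanh_sq_add_inv_cosh_sq _)

theorem breather_second_order_identity (α β x₁ x₂ : ℝ) (hα : 0 < α) (hβ : 0 < β) :
    ∀ x t : ℝ,
      iteratedDeriv 2 (fun y => breather α β x₁ x₂ y t) x +
        deriv (fun τ => breatherPrim α β x₁ x₂ x τ) t +
        (breather α β x₁ x₂ x t) ^ 3 = 0 :=
  breather_second_order_identity_general α β x₁ x₂ hα
end

section
/- For all α, β > 0, x₁, x₂ ∈ ℝ, and all (x,t) ∈ ℝ², the half mass integral of the breather admits the closed form: (1/2) ∫_{−∞}^{x} B̃_{α,β}(s,t;x₁,x₂)² ds = 2β[α² + β² + αβ sin(2α y₁) − β² cos(2α y₁) + α²(sinh(2β y₂) + cosh(2β y₂))] / [α² + β² + α² cosh(2β y₂) − β² cos(2α y₁)], where y₁ = x + δt + x₁ and y₂ = x + γt + x₂. -/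
open Real Filter MeasureTheory

/-!
Along `s ↦ (u, v) = (α y₁, β y₂)` the breather is the rational function
`2√2 αβ (α cos u cosh v - β sin u sinh v) / (α² cosh² v + β² sin² u)`, and its square has the
explicit primitive `4β (α² eᵛ cosh v + β² sin² u + αβ sin u cos u) / (α² cosh² v + β² sin² u)`,
which is `O(eᵛ)` and so vanishes at `-∞`. As the square is nonnegative, its integrability on
`(-∞, x]` comes for free, and the half mass is half the primitive at `x`, which double-angle
formulas turn into the stated closed form.
-/

open Set Topology

namespace MeasureTheory

theorem integrableOn_Iic_deriv_of_nonneg {g g' : ℝ → ℝ} {a l : ℝ}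
    (hderiv : ∀ x ∈ Iic a, HasDerivAt g (g' x) x) (hg' : ∀ x ∈ Iic a, 0 ≤ g' x)
    (hg : Tendsto g atBot (𝓝 l)) : IntegrableOn g' (Iic a) := by
  have hint : ∀ y ≤ a, IntegrableOn g' (Ioc y a) := fun y _ =>
    intervalIntegral.integrableOn_deriv_of_nonneg
      (HasDerivAt.continuousOn fun x hx => hderiv x hx.2)
      (fun x hx => hderiv x hx.2.le) (fun x hx => hg' x hx.2.le)
  refine integrableOn_Iic_of_intervalIntegral_norm_tendsto (g a - l) a
    (fun y => (le_total y a).elim (hint y) fun h => by simp [Ioc_eq_empty_of_le h])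
    tendsto_id ((hg.const_sub (g a)).congr' ?_)
  filter_upwards [eventually_le_atBot a] with y hy
  calc g a - g y = ∫ x in y..a, g' x :=
        (intervalIntegral.integral_eq_sub_of_hasDerivAt
          (fun x hx => hderiv x (uIcc_of_le hy ▸ hx).2)
          ((intervalIntegrable_iff_integrableOn_Ioc_of_le hy).2 (hint y hy))).symm
    _ = ∫ x in y..a, ‖g' x‖ := intervalIntegral.integral_congr fun x hx =>
        (Real.norm_of_nonneg (hg' x ((uIcc_of_le hy ▸ hx).2))).symm

theorem integral_Iic_of_hasDerivAt_of_nonneg {g g' : ℝ → ℝ} {a l : ℝ}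
    (hderiv : ∀ x ∈ Iic a, HasDerivAt g (g' x) x) (hg' : ∀ x ∈ Iic a, 0 ≤ g' x)
    (hg : Tendsto g atBot (𝓝 l)) : ∫ x in Iic a, g' x = g a - l :=
  integral_Iic_of_hasDerivAt_of_tendsto' hderiv (integrableOn_Iic_deriv_of_nonneg hderiv hg' hg) hg

end MeasureTheory

namespace Breather

noncomputable def denom (α β u v : ℝ) : ℝ := α ^ 2 * cosh v ^ 2 + β ^ 2 * sin u ^ 2

noncomputable def profile (α β u v : ℝ) : ℝ :=
  2 * √2 * α * β * (α * cos u * cosh v - β * sin u * sinh v) / denom α β u v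

noncomputable def massPrimitive (α β u v : ℝ) : ℝ :=
  4 * β * (α ^ 2 * cosh v * exp v + β ^ 2 * sin u ^ 2 + α * β * sin u * cos u) / denom α β u v

variable {α β : ℝ}

theorem denom_pos (hα : α ≠ 0) (u v : ℝ) : 0 < denom α β u v := by
  unfold denom; positivity

theorem profile_sq (α β u v : ℝ) :
    profile α β u v ^ 2 =
      8 * α ^ 2 * β ^ 2 * (α * cos u * cosh v - β * sin u * sinh v) ^ 2 / denom α β u v ^ 2 := by
  rw [profile, div_pow, mul_pow, mul_pow, mul_pow, mul_pow, sq_sqrt zero_le_two]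
  ring

theorem hasDerivAt_massPrimitive (hα : α ≠ 0) {u v : ℝ → ℝ} {s : ℝ} (hu : HasDerivAt u α s)
    (hv : HasDerivAt v β s) :
    HasDerivAt (fun s => massPrimitive α β (u s) (v s)) (profile α β (u s) (v s) ^ 2) s := by
  have hD := denom_pos (β := β) hα (u s) (v s)
  have hnum := (((hv.cosh.const_mul (α ^ 2)).mul hv.exp).add ((hu.sin.pow 2).const_mul (β ^ 2))).add
    ((hu.sin.const_mul (α * β)).mul hu.cos)
  have hden := ((hv.cosh.pow 2).const_mul (α ^ 2)).add ((hu.sin.pow 2).const_mul (β ^ 2))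
  have h : HasDerivAt (fun s => massPrimitive α β (u s) (v s)) _ s :=
    (hnum.const_mul (4 * β)).div hden hD.ne'
  refine h.congr_deriv ?_
  rw [profile_sq]
  unfold denom at hD ⊢
  simp only [Pi.add_apply, Pi.mul_apply, Pi.pow_apply, ← cosh_add_sinh]
  rw [div_eq_div_iff (by positivity) (by positivity)]
  linear_combination (4 * α ^ 2 * β ^ 2 * (α ^ 2 * cosh (v s) ^ 2 + β ^ 2 * sin (u s) ^ 2) ^ 3) *
    (cosh_sq_sub_sinh_sq (v s) - sin_sq_add_cos_sq (u s))

theorem abs_massPrimitive_le (hα : α ≠ 0) (u v : ℝ) :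
    |massPrimitive α β u v| ≤ 4 * |β| * (1 + 2 * (β ^ 2 + |α * β|) / α ^ 2) * exp v := by
  have hD := denom_pos (β := β) hα u v
  have hc : 1 ≤ cosh v := one_le_cosh v
  have hE := exp_pos v
  have hcE : 1 ≤ 2 * cosh v * exp v := by
    rw [cosh_eq, ← sub_nonneg]
    have h : exp v * exp (-v) = 1 := by rw [← exp_add, add_neg_cancel, exp_zero]
    nlinarith [sq_nonneg (exp v)]
  have hM : |β ^ 2 * sin u ^ 2 + α * β * sin u * cos u| ≤ β ^ 2 + |α * β| := by
    refine (abs_add_le _ _).trans (add_le_add ?_ ?_)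
    · rw [abs_of_nonneg (by positivity)]
      exact mul_le_of_le_one_right (sq_nonneg β) (sin_sq_le_one u)
    · rw [mul_assoc, abs_mul]
      refine mul_le_of_le_one_right (abs_nonneg _) ?_
      rw [abs_mul]
      exact mul_le_one₀ (abs_sin_le_one u) (abs_nonneg _) (abs_cos_le_one u)
  rw [massPrimitive, abs_div, abs_of_pos hD, div_le_iff₀ hD, add_assoc]
  calc |4 * β * (α ^ 2 * cosh v * exp v + (β ^ 2 * sin u ^ 2 + α * β * sin u * cos u))|
      ≤ 4 * |β| * (α ^ 2 * cosh v * exp v + (β ^ 2 + |α * β|)) := by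
        rw [abs_mul, abs_mul, abs_of_pos four_pos]
        gcongr
        refine (abs_add_le _ _).trans ?_
        rw [abs_of_pos (by positivity)]
        gcongr
    _ ≤ 4 * |β| * (α ^ 2 * cosh v ^ 2 * exp v + 2 * (β ^ 2 + |α * β|) * cosh v ^ 2 * exp v) := by
        gcongr
        · nlinarith
        · have hc2E : 1 ≤ 2 * cosh v ^ 2 * exp v := by nlinarith
          nlinarith [mul_le_mul_of_nonneg_left hc2E (by positivity : (0:ℝ) ≤ β ^ 2 + |α * β|)]
    _ = 4 * |β| * (1 + 2 * (β ^ 2 + |α * β|) / α ^ 2) * exp v * (α ^ 2 * cosh v ^ 2) := by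
        field_simp
    _ ≤ 4 * |β| * (1 + 2 * (β ^ 2 + |α * β|) / α ^ 2) * exp v * denom α β u v := by
        gcongr
        exact le_add_of_nonneg_right (by positivity)

theorem tendsto_massPrimitive_zero (hα : α ≠ 0) {ι : Type*} {l : Filter ι} {u v : ι → ℝ}
    (hv : Tendsto v l atBot) : Tendsto (fun i => massPrimitive α β (u i) (v i)) l (𝓝 0) := by
  have h := (tendsto_exp_atBot.comp hv).const_mul (4 * |β| * (1 + 2 * (β ^ 2 + |α * β|) / α ^ 2))
  rw [mul_zero] at h
  exact squeeze_zero_norm (fun i => abs_massPrimitive_le hα (u i) (v i)) h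

theorem massPrimitive_eq_double_angle (α β u v : ℝ) :
    massPrimitive α β u v =
      4 * β * (α^2 + β^2 + α*β*sin (2*u) - β^2*cos (2*u) + α^2*(sinh (2*v) + cosh (2*v))) /
        (α^2 + β^2 + α^2*cosh (2*v) - β^2*cos (2*u)) := by
  have hN : α^2 + β^2 + α*β*sin (2*u) - β^2*cos (2*u) + α^2*(sinh (2*v) + cosh (2*v)) =
      2 * (α ^ 2 * cosh v * exp v + β ^ 2 * sin u ^ 2 + α * β * sin u * cos u) := by
    rw [sin_two_mul, cos_two_mul, sinh_two_mul, cosh_two_mul, ← cosh_add_sinh]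
    linear_combination -2 * β ^ 2 * sin_sq_add_cos_sq u - α ^ 2 * cosh_sq_sub_sinh_sq v
  have hD : α^2 + β^2 + α^2*cosh (2*v) - β^2*cos (2*u) = 2 * denom α β u v := by
    rw [cos_two_mul, cosh_two_mul, denom]
    linear_combination -2 * β ^ 2 * sin_sq_add_cos_sq u - α ^ 2 * cosh_sq_sub_sinh_sq v
  rw [hN, hD, massPrimitive, mul_left_comm, mul_div_mul_left _ _ two_ne_zero]

end Breather

open Breather

theorem breather_eq_profile {α β : ℝ} (hα : α ≠ 0) (x₁ x₂ x t : ℝ) :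
    breather α β x₁ x₂ x t =
      profile α β (α * (x + (α^2 - 3*β^2)*t + x₁)) (β * (x + (3*α^2 - β^2)*t + x₂)) := by
  have hD := denom_pos (β := β) hα (α * (x + (α^2 - 3*β^2)*t + x₁)) (β * (x + (3*α^2 - β^2)*t + x₂))
  have hC := (cosh_pos (β * (x + (3*α^2 - β^2)*t + x₂))).ne'
  unfold denom at hD
  rw [breather, profile, denom, tanh_eq_sinh_div_cosh]
  field_simp

theorem integral_Iic_breather_sq {α β : ℝ} (hα : α ≠ 0) (hβ : 0 < β) (x₁ x₂ x t : ℝ) :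
    ∫ s in Iic x, breather α β x₁ x₂ s t ^ 2 =
      massPrimitive α β (α * (x + (α^2 - 3*β^2)*t + x₁)) (β * (x + (3*α^2 - β^2)*t + x₂)) := by
  have hu (s : ℝ) : HasDerivAt (fun s => α * (s + (α^2 - 3*β^2)*t + x₁)) α s := by
    simpa using (((hasDerivAt_id s).add_const _).add_const _).const_mul α
  have hv (s : ℝ) : HasDerivAt (fun s => β * (s + (3*α^2 - β^2)*t + x₂)) β s := by
    simpa using (((hasDerivAt_id s).add_const _).add_const _).const_mul β
  have hv_atBot : Tendsto (fun s => β * (s + (3*α^2 - β^2)*t + x₂)) atBot atBot :=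
    (tendsto_atBot_add_const_right _ _
      (tendsto_atBot_add_const_right _ _ tendsto_id)).const_mul_atBot hβ
  simp_rw [breather_eq_profile hα]
  rw [integral_Iic_of_hasDerivAt_of_nonneg (fun s _ => hasDerivAt_massPrimitive hα (hu s) (hv s))
    (fun s _ => sq_nonneg _) (tendsto_massPrimitive_zero hα hv_atBot), sub_zero]

theorem breather_half_mass_closed_form (α β x₁ x₂ : ℝ) (hα : 0 < α) (hβ : 0 < β)
    (x t y₁ y₂ : ℝ) (hy₁ : y₁ = x + (α^2 - 3*β^2)*t + x₁)
    (hy₂ : y₂ = x + (3*α^2 - β^2)*t + x₂) :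
    (1/2) * ∫ s in Set.Iic x, (breather α β x₁ x₂ s t) ^ 2 =
      2 * β * (α^2 + β^2 + α*β*Real.sin (2*α*y₁) - β^2*Real.cos (2*α*y₁) +
          α^2*(Real.sinh (2*β*y₂) + Real.cosh (2*β*y₂))) /
        (α^2 + β^2 + α^2*Real.cosh (2*β*y₂) - β^2*Real.cos (2*α*y₁)) := by
  rw [integral_Iic_breather_sq hα.ne' hβ, ← hy₁, ← hy₂, massPrimitive_eq_double_angle,
    mul_assoc 2 α y₁, mul_assoc 2 β y₂]
  ring
end

section
/- There exists a constant C > 0 such that for every twice continuously differentiable u : (−∞,0] → ℝ with u(0) = 0 and u'(0) = 0, with u, u', u'' square-integrable on (−∞,0] and u(x), u'(x) → 0 as x → −∞, one has (1/4) ∫_{−∞}^0 (u'')² ≤ F[u] + C (∫_{−∞}^0 u²)⁵, where F[u] = ∫_{−∞}^0 ((1/2)(u'')² − (5/2)u²(u')² + (1/4)u⁶). -/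
/-!
Integrating by parts, `‖u'‖₂² = -∫ u u'' ≤ ‖u‖₂ ‖u''‖₂`, and integrating `(u²)' = 2 u u'` from `-∞`
gives `‖u‖_∞² ≤ 2 ‖u‖₂ ‖u'‖₂`. Hence the only negative term of `F[u]` is controlled by
`∫ u² u'² ≤ ‖u‖_∞² ‖u'‖₂² ≤ 2 ‖u‖₂^{5/2} ‖u''‖₂^{3/2}`, and Young's inequality with exponents
`4/3` and `4` absorbs it into `(1/4) ‖u''‖₂²` at the cost of a multiple of `‖u‖₂^{10}`.
-/

open Real Filter MeasureTheory Set Topology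

section MeasureSpace

variable {α : Type*} [MeasurableSpace α] {μ : Measure α}

theorem integral_abs_mul_le_sqrt_mul_sqrt {f g : α → ℝ} (hf : MemLp f 2 μ)
    (hg : MemLp g 2 μ) :
    ∫ x, |f x * g x| ∂μ ≤ √(∫ x, f x ^ 2 ∂μ) * √(∫ x, g x ^ 2 ∂μ) := by
  have h := integral_mul_le_Lp_mul_Lq_of_nonneg (p := 2) (q := 2) Real.HolderConjugate.two_two
    (.of_forall fun x => abs_nonneg (f x)) (.of_forall fun x => abs_nonneg (g x))
    (by rw [ENNReal.ofReal_ofNat]; exact hf.abs) (by rw [ENNReal.ofReal_ofNat]; exact hg.abs)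
  simpa [abs_mul, Real.sqrt_eq_rpow] using h

theorem le_integral_energy {u v w : α → ℝ} {M : ℝ} (hu : MemLp u 2 μ)
    (hv : Integrable (fun x => v x ^ 2) μ) (hw : Integrable (fun x => w x ^ 2) μ)
    (hM : ∀ᵐ x ∂μ, u x ^ 2 ≤ M) :
    (1/2) * ∫ x, w x ^ 2 ∂μ - (5/2) * M * ∫ x, v x ^ 2 ∂μ ≤
      ∫ x, ((1/2) * w x ^ 2 - (5/2) * u x ^ 2 * v x ^ 2 + (1/4) * u x ^ 6) ∂μ := by
  have hu2 : AEStronglyMeasurable (fun x => u x ^ 2) μ := hu.1.pow 2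
  have huv : Integrable (fun x => u x ^ 2 * v x ^ 2) μ :=
    hv.bdd_mul hu2 (hM.mono fun x hx => by rwa [norm_of_nonneg (sq_nonneg _)])
  have hu6 : Integrable (fun x => u x ^ 6) μ := by
    refine ((memLp_two_iff_integrable_sq hu.1).1 hu).bdd_mul (f := fun x => (u x ^ 2) ^ 2)
      (c := M ^ 2) (hu2.pow 2) (hM.mono fun x hx => ?_) |>.congr (.of_forall fun x => by ring)
    rw [norm_of_nonneg (by positivity)]
    exact pow_le_pow_left₀ (sq_nonneg _) hx 2
  have hlower : Integrable (fun x => (1/2) * w x ^ 2 - (5/2) * M * v x ^ 2) μ :=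
    (hw.const_mul _).sub (hv.const_mul _)
  have henergy : Integrable
      (fun x => (1/2) * w x ^ 2 - (5/2) * u x ^ 2 * v x ^ 2 + (1/4) * u x ^ 6) μ :=
    ((hw.const_mul _).sub ((huv.const_mul (5/2)).congr (.of_forall fun x => by ring))).add
      (hu6.const_mul _)
  calc (1/2) * ∫ x, w x ^ 2 ∂μ - (5/2) * M * ∫ x, v x ^ 2 ∂μ
      = ∫ x, ((1/2) * w x ^ 2 - (5/2) * M * v x ^ 2) ∂μ := by
        rw [integral_sub (hw.const_mul _) (hv.const_mul _), integral_const_mul,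
          integral_const_mul]
    _ ≤ _ := integral_mono_ae hlower henergy <| hM.mono fun x hx => by
        nlinarith [mul_le_mul_of_nonneg_right hx (sq_nonneg (v x)),
          pow_nonneg (sq_nonneg (u x)) 3]

end MeasureSpace

section RealLine

theorem integral_Iic_deriv_sq_eq {f : ℝ → ℝ} {a : ℝ} (hf : ContDiff ℝ 2 f)
    (hff'' : IntegrableOn (fun x => f x * deriv (deriv f) x) (Iic a))
    (hf' : IntegrableOn (fun x => deriv f x ^ 2) (Iic a))
    (hlim : Tendsto (fun x => f x * deriv f x) atBot (𝓝 0)) :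
    ∫ x in Iic a, deriv f x ^ 2 = f a * deriv f a - ∫ x in Iic a, f x * deriv (deriv f) x := by
  have hf1 : ContDiff ℝ 1 (deriv f) := hf.iterate_deriv' 1 1
  have hd : Differentiable ℝ f := hf.differentiable (by norm_num)
  have hd' : Differentiable ℝ (deriv f) := hf1.differentiable one_ne_zero
  have h := integral_Iic_mul_deriv_eq_deriv_mul (fun x _ => (hd x).hasDerivAt)
    (fun x _ => (hd' x).hasDerivAt) hff''
    (hf'.congr_fun (fun x _ => sq (deriv f x)) measurableSet_Iic)
    (((hd.mul hd').continuous.tendsto a).mono_left nhdsWithin_le_nhds) hlim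
  simp only [sub_zero, ← sq, Pi.mul_apply] at h
  linarith

theorem integral_Iic_deriv_sq_le_sqrt_mul_sqrt {f : ℝ → ℝ} {a : ℝ} (hf : ContDiff ℝ 2 f)
    (ha : f a * deriv f a = 0) (h0 : MemLp f 2 (volume.restrict (Iic a)))
    (h1 : IntegrableOn (fun x => deriv f x ^ 2) (Iic a))
    (h2 : MemLp (deriv (deriv f)) 2 (volume.restrict (Iic a)))
    (hlim : Tendsto f atBot (𝓝 0)) (hlim' : Tendsto (deriv f) atBot (𝓝 0)) :
    ∫ x in Iic a, deriv f x ^ 2 ≤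
      √(∫ x in Iic a, f x ^ 2) * √(∫ x in Iic a, deriv (deriv f) x ^ 2) := by
  have hff'' : IntegrableOn (fun x => f x * deriv (deriv f) x) (Iic a) := h0.integrable_mul h2
  rw [integral_Iic_deriv_sq_eq hf hff'' h1 (by simpa using hlim.mul hlim'), ha, zero_sub]
  calc -∫ x in Iic a, f x * deriv (deriv f) x
      ≤ ∫ x in Iic a, |f x * deriv (deriv f) x| :=
        (neg_le_abs _).trans abs_integral_le_integral_abs
    _ ≤ _ := integral_abs_mul_le_sqrt_mul_sqrt h0 h2

theorem sq_le_two_mul_sqrt_mul_sqrt {f : ℝ → ℝ} {a x : ℝ} (hf : Differentiable ℝ f)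
    (hx : x ≤ a) (h0 : MemLp f 2 (volume.restrict (Iic a)))
    (h1 : MemLp (deriv f) 2 (volume.restrict (Iic a)))
    (hlim : Tendsto f atBot (𝓝 0)) :
    f x ^ 2 ≤ 2 * (√(∫ y in Iic a, f y ^ 2) * √(∫ y in Iic a, deriv f y ^ 2)) := by
  have hint : IntegrableOn (fun y => 2 * (f y * deriv f y)) (Iic a) :=
    (h0.integrable_mul h1).const_mul 2
  have hftc := integral_Iic_of_hasDerivAt_of_tendsto' (a := x) (f := fun y => f y ^ 2)
    (fun y _ => ((hf y).hasDerivAt.pow 2).congr_deriv (by ring))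
    (hint.mono_set (Iic_subset_Iic.mpr hx)) (by simpa using hlim.pow 2)
  calc f x ^ 2 = ∫ y in Iic x, 2 * (f y * deriv f y) := by rw [hftc, sub_zero]
    _ ≤ ∫ y in Iic a, |2 * (f y * deriv f y)| :=
        (le_abs_self _).trans <| (abs_integral_le_integral_abs).trans <|
          setIntegral_mono_set hint.abs (.of_forall fun _ => abs_nonneg _)
            (Iic_subset_Iic.mpr hx).eventuallyLE
    _ = 2 * ∫ y in Iic a, |f y * deriv f y| := by
        simp only [abs_mul, abs_two, integral_const_mul]
    _ ≤ _ := by gcongr; exact integral_abs_mul_le_sqrt_mul_sqrt h0 h1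

end RealLine

-- Young's inequality with exponents `4` and `4/3`, sharp at `s = 15 r`.
theorem five_mul_mul_pow_three_le (r s : ℝ) :
    5 * r * s ^ 3 ≤ (1/4) * s ^ 4 + (16875/4) * r ^ 4 := by
  nlinarith [mul_nonneg (sq_nonneg (s - 15 * r)) (sq_nonneg (s + 5 * r)),
    mul_nonneg (sq_nonneg (s - 15 * r)) (sq_nonneg r)]

theorem five_mul_sqrt_mul_sqrt_mul_le {A B D : ℝ} (hA : 0 ≤ A) (hB : 0 ≤ B) (hD : 0 ≤ D)
    (hBAD : B ≤ √A * √D) :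
    5 * (√A * √B) * B ≤ D / 4 + (16875/4) * A ^ 5 := by
  set p := √√A
  set q := √√D
  have hp : √A = p ^ 2 := (sq_sqrt (sqrt_nonneg A)).symm
  have hq : √D = q ^ 2 := (sq_sqrt (sqrt_nonneg D)).symm
  have hpA : A = p ^ 4 := by rw [← sq_sqrt hA, hp]; ring
  have hqD : D = q ^ 4 := by rw [← sq_sqrt hD, hq]; ring
  have hBpq : B ≤ (p * q) ^ 2 := by rw [mul_pow, ← hp, ← hq]; exact hBAD
  have hsB : √B ≤ p * q := sqrt_le_left (by positivity) |>.mpr hBpq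
  calc 5 * (√A * √B) * B ≤ 5 * (p ^ 2 * (p * q)) * (p * q) ^ 2 := by
        rw [hp]; gcongr
    _ = 5 * p ^ 5 * q ^ 3 := by ring
    _ ≤ (1/4) * q ^ 4 + (16875/4) * (p ^ 5) ^ 4 := five_mul_mul_pow_three_le _ _
    _ = D / 4 + (16875/4) * A ^ 5 := by rw [hpA, hqD]; ring

theorem apriori_second_derivative_bound :
    ∃ C > (0:ℝ), ∀ u : ℝ → ℝ,
      ContDiff ℝ 2 u →
      u 0 = 0 → deriv u 0 = 0 →
      IntegrableOn (fun x => (u x) ^ 2) (Set.Iic 0) →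
      IntegrableOn (fun x => (deriv u x) ^ 2) (Set.Iic 0) →
      IntegrableOn (fun x => (iteratedDeriv 2 u x) ^ 2) (Set.Iic 0) →
      Tendsto u atBot (nhds 0) →
      Tendsto (deriv u) atBot (nhds 0) →
      (1/4) * (∫ x in Set.Iic (0:ℝ), (iteratedDeriv 2 u x) ^ 2) ≤
        (∫ x in Set.Iic (0:ℝ),
          ((1/2) * (iteratedDeriv 2 u x) ^ 2 - (5/2) * (u x) ^ 2 * (deriv u x) ^ 2 +
            (1/4) * (u x) ^ 6)) +
        C * (∫ x in Set.Iic (0:ℝ), (u x) ^ 2) ^ 5 := by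
  refine ⟨16875/4, by norm_num, fun u hu hu0 _ hA hB hD hlim hlim' => ?_⟩
  rw [show iteratedDeriv 2 u = deriv (deriv u) by simp [iteratedDeriv_succ']] at hD ⊢
  have hmem : ∀ {g : ℝ → ℝ}, Continuous g → IntegrableOn (fun x => g x ^ 2) (Iic 0) →
      MemLp g 2 (volume.restrict (Iic 0)) :=
    fun hg hg2 => (memLp_two_iff_integrable_sq hg.aestronglyMeasurable).2 hg2
  have hu' : ContDiff ℝ 1 (deriv u) := hu.iterate_deriv' 1 1
  have hu2 := hmem hu.continuous hA
  have hBAD := integral_Iic_deriv_sq_le_sqrt_mul_sqrt hu (by simp [hu0]) hu2 hB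
    (hmem (hu'.continuous_deriv le_rfl) hD) hlim hlim'
  have hsup := (ae_restrict_mem (μ := volume) measurableSet_Iic).mono fun x hx =>
    sq_le_two_mul_sqrt_mul_sqrt (hu.differentiable (by norm_num)) (mem_Iic.mp hx) hu2
      (hmem hu'.continuous hB) hlim
  have henergy := le_integral_energy hu2 hB hD hsup
  have hyoung := five_mul_sqrt_mul_sqrt_mul_le (integral_nonneg fun x => sq_nonneg (u x))
    (integral_nonneg fun x => sq_nonneg (deriv u x))
    (integral_nonneg fun x => sq_nonneg (deriv (deriv u) x)) hBAD
  linarith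
end

section
/- Let α, β > 0 with β < √3·α (so that γ = 3α² − β² > 0), and let L > 0. There exists a constant C > 0, depending only on α and β, such that for all t ≥ 0, all ρ₁ ∈ ℝ, all ρ₂ ∈ (−L/2, L/2), all j ∈ {1,2} and all k ∈ {0,1,2,3}: | ∂_{x_j} ∂_x^k B̃_{α,β}(x,t; x₁, x₂) evaluated at x = 0, x₁ = ρ₁, x₂ = ρ₂ + L | ≤ C e^{−βL/2}, where ∂_{x_1} and ∂_{x_2} denote derivatives with respect to the translation parameters. -/
open Real Filter MeasureTheory

/-! With `u = y₁` and `v = y₂`, the breather is `g (u, v) / cosh (β v)`, where `g` is assembled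
from `sin (α u)`, `cos (α u)`, `tanh (β v)`, `sech (β v)` and the reciprocal of a function `≥ 1`, so
`g` is bounded together with all its partial derivatives. Since `∂ₓ = ∂ᵤ + ∂ᵥ` and
`∂ᵥ (1 / cosh (β v)) = -β tanh (β v) / cosh (β v)`, the functions `g / cosh (β v)` with such `g`
are stable under `∂ₓ`, and their partials `∂_{x₁} = ∂ᵤ`, `∂_{x₂} = ∂ᵥ` are `O(1 / cosh (β v))`.
At the evaluation point `v = ρ₂ + L + γ t ≥ L / 2` because `γ > 0`,
and `1 / cosh (β v) ≤ 2 e^{-β v}`. -/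

open ContinuousLinearMap

theorem abs_inv_le_one_of_one_le {x : ℝ} (hx : 1 ≤ x) : |x⁻¹| ≤ 1 := by
  rw [abs_of_pos (inv_pos.2 (zero_lt_one.trans_le hx))]
  exact inv_le_one_of_one_le₀ hx

def BddDerivs : ℕ → (ℝ × ℝ → ℝ) → Prop
  | 0, f => ∃ M, ∀ p, |f p| ≤ M
  | n + 1, f => (∃ M, ∀ p, |f p| ≤ M) ∧ ∃ f₁ f₂ : ℝ × ℝ → ℝ, BddDerivs n f₁ ∧ BddDerivs n f₂ ∧
      ∀ p, HasFDerivAt f (f₁ p • fst ℝ ℝ ℝ + f₂ p • snd ℝ ℝ ℝ) p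

namespace BddDerivs

variable {n : ℕ} {f g : ℝ × ℝ → ℝ}

theorem bdd (hf : BddDerivs n f) : ∃ M, ∀ p, |f p| ≤ M := by
  cases n with
  | zero => exact hf
  | succ n => exact hf.1

theorem exists_pos_bound (hf : BddDerivs n f) : ∃ M > 0, ∀ p, |f p| ≤ M := by
  obtain ⟨M, hM⟩ := hf.bdd
  exact ⟨max M 1, by positivity, fun p => (hM p).trans (le_max_left _ _)⟩

theorem of_succ (hf : BddDerivs (n + 1) f) : BddDerivs n f := by
  induction n generalizing f with
  | zero => exact hf.1
  | succ n ih =>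
    obtain ⟨hb, f₁, f₂, h₁, h₂, hd⟩ := hf
    exact ⟨hb, f₁, f₂, ih h₁, ih h₂, hd⟩

theorem const (n : ℕ) (c : ℝ) : BddDerivs n fun _ => c := by
  induction n generalizing c with
  | zero => exact ⟨|c|, fun _ => le_rfl⟩
  | succ n ih =>
    refine ⟨⟨|c|, fun _ => le_rfl⟩, _, _, ih 0, ih 0, fun p => ?_⟩
    simpa using hasFDerivAt_const c p

theorem add (hf : BddDerivs n f) (hg : BddDerivs n g) : BddDerivs n fun p => f p + g p := by
  induction n generalizing f g with
  | zero =>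
    obtain ⟨M, hM⟩ := hf
    obtain ⟨N, hN⟩ := hg
    exact ⟨M + N, fun p => (abs_add_le _ _).trans (add_le_add (hM p) (hN p))⟩
  | succ n ih =>
    have hfn := hf.of_succ
    have hgn := hg.of_succ
    obtain ⟨-, f₁, f₂, hf₁, hf₂, hf'⟩ := hf
    obtain ⟨-, g₁, g₂, hg₁, hg₂, hg'⟩ := hg
    exact ⟨(ih hfn hgn).bdd, _, _, ih hf₁ hg₁, ih hf₂ hg₂, fun p =>
      ((hf' p).add (hg' p)).congr_fderiv (by module)⟩

theorem mul (hf : BddDerivs n f) (hg : BddDerivs n g) : BddDerivs n fun p => f p * g p := by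
  induction n generalizing f g with
  | zero =>
    obtain ⟨M, hM⟩ := hf
    obtain ⟨N, hN⟩ := hg
    refine ⟨M * N, fun p => ?_⟩
    rw [abs_mul]
    exact mul_le_mul (hM p) (hN p) (abs_nonneg _) ((abs_nonneg _).trans (hM p))
  | succ n ih =>
    have hfn := hf.of_succ
    have hgn := hg.of_succ
    obtain ⟨-, f₁, f₂, hf₁, hf₂, hf'⟩ := hf
    obtain ⟨-, g₁, g₂, hg₁, hg₂, hg'⟩ := hg
    exact ⟨(ih hfn hgn).bdd, fun p => f₁ p * g p + f p * g₁ p, fun p => f₂ p * g p + f p * g₂ p,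
      (ih hf₁ hgn).add (ih hfn hg₁), (ih hf₂ hgn).add (ih hfn hg₂), fun p =>
      ((hf' p).mul (hg' p)).congr_fderiv (by module)⟩

theorem neg (hf : BddDerivs n f) : BddDerivs n fun p => -f p := by
  simpa using (const n (-1)).mul hf

theorem sub (hf : BddDerivs n f) (hg : BddDerivs n g) : BddDerivs n fun p => f p - g p := by
  simpa [sub_eq_add_neg] using hf.add hg.neg

theorem inv_of_one_le (hf : BddDerivs n f) (h1 : ∀ p, 1 ≤ f p) :
    BddDerivs n fun p => (f p)⁻¹ := by
  have hbdd : ∃ M, ∀ p, |(f p)⁻¹| ≤ M := ⟨1, fun p => abs_inv_le_one_of_one_le (h1 p)⟩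
  induction n generalizing f with
  | zero => exact hbdd
  | succ n ih =>
    have hinv := ih hf.of_succ h1 hbdd
    obtain ⟨-, f₁, f₂, hf₁, hf₂, hf'⟩ := hf
    exact ⟨hbdd, fun p => -f₁ p * (f p)⁻¹ * (f p)⁻¹, fun p => -f₂ p * (f p)⁻¹ * (f p)⁻¹,
      (hf₁.neg.mul hinv).mul hinv, (hf₂.neg.mul hinv).mul hinv, fun p =>
      ((hasDerivAt_inv (zero_lt_one.trans_le (h1 p)).ne').comp_hasFDerivAt p (hf' p)).congr_fderiv
        (by module)⟩

end BddDerivs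

theorem Real.hasDerivAt_tanh_s17 (x : ℝ) : HasDerivAt tanh (cosh x ^ 2)⁻¹ x := by
  have h := (hasDerivAt_sinh x).div (hasDerivAt_cosh x) (cosh_pos x).ne'
  rw [show sinh / cosh = tanh from funext fun y => (tanh_eq_sinh_div_cosh y).symm] at h
  refine h.congr_deriv ?_
  rw [← one_div, ← cosh_sq_sub_sinh_sq x]
  ring

theorem bddDerivs_sin_cos_fst (α : ℝ) (n : ℕ) :
    BddDerivs n (fun p => sin (α * p.1)) ∧ BddDerivs n (fun p => cos (α * p.1)) := by
  have hlin : ∀ p : ℝ × ℝ, HasFDerivAt (fun p : ℝ × ℝ => α * p.1) (α • fst ℝ ℝ ℝ) p :=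
    fun p => (hasFDerivAt_fst).const_mul α
  induction n with
  | zero => exact ⟨⟨1, fun p => abs_sin_le_one _⟩, ⟨1, fun p => abs_cos_le_one _⟩⟩
  | succ n ih =>
    exact ⟨⟨⟨1, fun p => abs_sin_le_one _⟩, _, _, (BddDerivs.const n α).mul ih.2,
      BddDerivs.const n 0, fun p => ((hlin p).sin).congr_fderiv (by module)⟩,
      ⟨⟨1, fun p => abs_cos_le_one _⟩, _, _, ((BddDerivs.const n α).mul ih.1).neg,
      BddDerivs.const n 0, fun p => ((hlin p).cos).congr_fderiv (by module)⟩⟩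

theorem bddDerivs_tanh_inv_cosh_snd (β : ℝ) (n : ℕ) :
    BddDerivs n (fun p => tanh (β * p.2)) ∧ BddDerivs n (fun p => (cosh (β * p.2))⁻¹) := by
  have hlin : ∀ p : ℝ × ℝ, HasFDerivAt (fun p : ℝ × ℝ => β * p.2) (β • snd ℝ ℝ ℝ) p :=
    fun p => (hasFDerivAt_snd).const_mul β
  have htanh : ∀ x, |tanh x| ≤ 1 := fun x => (abs_tanh_lt_one x).le
  have hsech : ∀ x, |(cosh x)⁻¹| ≤ 1 := fun x => abs_inv_le_one_of_one_le (one_le_cosh x)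
  induction n with
  | zero => exact ⟨⟨1, fun p => htanh _⟩, ⟨1, fun p => hsech _⟩⟩
  | succ n ih =>
    exact ⟨⟨⟨1, fun p => htanh _⟩, _, _, BddDerivs.const n 0,
      (BddDerivs.const n β).mul (ih.2.mul ih.2),
      fun p => ((hasDerivAt_tanh_s17 _).comp_hasFDerivAt p (hlin p)).congr_fderiv (by module)⟩,
      ⟨⟨1, fun p => hsech _⟩, _, _, BddDerivs.const n 0,
      ((BddDerivs.const n β).mul (ih.1.mul ih.2)).neg,
      fun p => ((hasDerivAt_inv (cosh_pos _).ne').comp_hasFDerivAt p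
        ((hlin p).cosh)).congr_fderiv (by rw [tanh_eq_sinh_div_cosh]; module)⟩⟩

theorem HasFDerivAt.hasDerivAt_comp_prodMk {f : ℝ × ℝ → ℝ} {a b : ℝ} {φ ψ : ℝ → ℝ}
    {φ' ψ' x : ℝ} (hf : HasFDerivAt f (a • fst ℝ ℝ ℝ + b • snd ℝ ℝ ℝ) (φ x, ψ x))
    (hφ : HasDerivAt φ φ' x) (hψ : HasDerivAt ψ ψ' x) :
    HasDerivAt (fun y => f (φ y, ψ y)) (a * φ' + b * ψ') x :=
  (hf.comp_hasDerivAt x (hφ.prodMk hψ)).congr_deriv (by simp)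

theorem HasDerivAt.div_cosh {φ ψ : ℝ → ℝ} {φ' ψ' x : ℝ} (hφ : HasDerivAt φ φ' x)
    (hψ : HasDerivAt ψ ψ' x) :
    HasDerivAt (fun y => φ y / Real.cosh (ψ y))
      ((φ' - ψ' * Real.tanh (ψ x) * φ x) / Real.cosh (ψ x)) x := by
  refine (hφ.fun_div hψ.cosh (cosh_pos _).ne').congr_deriv ?_
  rw [tanh_eq_sinh_div_cosh]
  field_simp

def SechWeighted (β : ℝ) (n : ℕ) (F : ℝ × ℝ → ℝ) : Prop :=
  ∃ g, BddDerivs n g ∧ F = fun p => g p / cosh (β * p.2)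

namespace SechWeighted

variable {β : ℝ} {n : ℕ} {F : ℝ × ℝ → ℝ}

theorem hasDerivAt_diag (hF : SechWeighted β (n + 1) F) :
    ∃ F', SechWeighted β n F' ∧
      ∀ u v x, HasDerivAt (fun y => F (u + y, v + y)) (F' (u + x, v + x)) x := by
  obtain ⟨g, hg, rfl⟩ := hF
  have hgn := hg.of_succ
  obtain ⟨-, g₁, g₂, hg₁, hg₂, hg'⟩ := hg
  refine ⟨_, ⟨fun p => g₁ p + g₂ p - β * tanh (β * p.2) * g p,
    (hg₁.add hg₂).sub (((BddDerivs.const n β).mul (bddDerivs_tanh_inv_cosh_snd β n).1).mul hgn),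
    rfl⟩, fun u v x => ?_⟩
  have hu := (hasDerivAt_id' x).const_add u
  have hv := (hasDerivAt_id' x).const_add v
  exact (((hg' _).hasDerivAt_comp_prodMk hu hv).div_cosh (hv.const_mul β)).congr_deriv
    (by simp only [mul_one])

theorem iteratedDeriv_diag (k : ℕ) (hF : SechWeighted β (n + k) F) :
    ∃ F', SechWeighted β n F' ∧
      ∀ u v, iteratedDeriv k (fun y => F (u + y, v + y)) = fun y => F' (u + y, v + y) := by
  induction k generalizing F with
  | zero => exact ⟨F, hF, fun u v => iteratedDeriv_zero⟩
  | succ k ih =>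
    obtain ⟨F₁, hF₁, hd⟩ := hasDerivAt_diag (n := n + k) hF
    obtain ⟨F', hF', hk⟩ := ih hF₁
    refine ⟨F', hF', fun u v => ?_⟩
    rw [iteratedDeriv_succ', funext fun x => (hd u v x).deriv, hk]

theorem exists_abs_deriv_le (hF : SechWeighted β 1 F) :
    ∃ C > 0, ∀ u v, |deriv (fun a => F (a, v)) u| ≤ C / cosh (β * v) ∧
      |deriv (fun b => F (u, b)) v| ≤ C / cosh (β * v) := by
  obtain ⟨g, hg, rfl⟩ := hF
  obtain ⟨M, hM, hgM⟩ := hg.exists_pos_bound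
  obtain ⟨-, g₁, g₂, hg₁, hg₂, hg'⟩ := hg
  obtain ⟨M₁, hM₁, hg₁M⟩ := hg₁.exists_pos_bound
  obtain ⟨M₂, hM₂, hg₂M⟩ := hg₂.exists_pos_bound
  refine ⟨M₁ + M₂ + |β| * M, by positivity, fun u v => ⟨?_, ?_⟩⟩
  · have hu := ((hg' (u, v)).hasDerivAt_comp_prodMk (hasDerivAt_id' u)
      (hasDerivAt_const u v)).div_cosh (hasDerivAt_const u (β * v))
    beta_reduce
    rw [hu.deriv, abs_div, abs_of_pos (cosh_pos _)]
    gcongr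
    simp only [mul_one, mul_zero, zero_mul, add_zero, sub_zero]
    linarith [hg₁M (u, v), mul_nonneg (abs_nonneg β) hM.le, hM₂]
  · have hv := ((hg' (u, v)).hasDerivAt_comp_prodMk (hasDerivAt_const v u)
      (hasDerivAt_id' v)).div_cosh ((hasDerivAt_id' v).const_mul β)
    beta_reduce
    rw [hv.deriv, abs_div, abs_of_pos (cosh_pos _)]
    gcongr
    simp only [mul_one, mul_zero, zero_add]
    have htg : |β * tanh (β * v) * g (u, v)| ≤ |β| * M := by
      rw [abs_mul, abs_mul]
      calc |β| * |tanh (β * v)| * |g (u, v)| ≤ |β| * 1 * M := by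
            gcongr
            exacts [(abs_tanh_lt_one _).le, hgM _]
        _ = |β| * M := by ring
    linarith [abs_sub (g₂ (u, v)) (β * tanh (β * v) * g (u, v)), hg₂M (u, v)]

end SechWeighted

noncomputable def breatherCarrier (α β : ℝ) (p : ℝ × ℝ) : ℝ :=
  2 * √2 * β * (cos (α * p.1) - β / α * sin (α * p.1) * tanh (β * p.2)) *
    (1 + (β / α) ^ 2 * sin (α * p.1) ^ 2 * (cosh (β * p.2))⁻¹ ^ 2)⁻¹

theorem bddDerivs_breatherCarrier (α β : ℝ) (n : ℕ) : BddDerivs n (breatherCarrier α β) := by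
  obtain ⟨hsin, hcos⟩ := bddDerivs_sin_cos_fst α n
  obtain ⟨htanh, hsech⟩ := bddDerivs_tanh_inv_cosh_snd β n
  have hden :
      BddDerivs n fun p => 1 + (β / α) ^ 2 * sin (α * p.1) ^ 2 * (cosh (β * p.2))⁻¹ ^ 2 := by
    convert (BddDerivs.const n 1).add
      (((((BddDerivs.const n ((β / α) ^ 2)).mul hsin).mul hsin).mul hsech).mul hsech) using 2 with p
    ring
  exact ((BddDerivs.const n _).mul (hcos.sub (((BddDerivs.const n _).mul hsin).mul htanh))).mul
    (hden.inv_of_one_le fun p => le_add_of_nonneg_right (by positivity))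

theorem breather_eq (α β x₁ x₂ x t : ℝ) :
    breather α β x₁ x₂ x t =
      breatherCarrier α β (x₁ + (α ^ 2 - 3 * β ^ 2) * t + x, x₂ + (3 * α ^ 2 - β ^ 2) * t + x) /
        cosh (β * (x₂ + (3 * α ^ 2 - β ^ 2) * t + x)) := by
  rw [breather, breatherCarrier,
    show x + (α ^ 2 - 3 * β ^ 2) * t + x₁ = x₁ + (α ^ 2 - 3 * β ^ 2) * t + x by ring,
    show x + (3 * α ^ 2 - β ^ 2) * t + x₂ = x₂ + (3 * α ^ 2 - β ^ 2) * t + x by ring]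
  simp only [one_div]
  ring

theorem exists_abs_deriv_iteratedDeriv_breather_le (α β : ℝ) (k : ℕ) :
    ∃ C > 0, ∀ x₁ x₂ t : ℝ,
      |deriv (fun a => iteratedDeriv k (fun y => breather α β a x₂ y t) 0) x₁| ≤
          C / cosh (β * (x₂ + (3 * α ^ 2 - β ^ 2) * t)) ∧
        |deriv (fun a => iteratedDeriv k (fun y => breather α β x₁ a y t) 0) x₂| ≤
          C / cosh (β * (x₂ + (3 * α ^ 2 - β ^ 2) * t)) := by
  obtain ⟨F, hF, hFk⟩ := SechWeighted.iteratedDeriv_diag (n := 1) k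
    ⟨_, bddDerivs_breatherCarrier α β (1 + k), rfl⟩
  obtain ⟨C, hC, hCF⟩ := hF.exists_abs_deriv_le
  have hB : ∀ x₁ x₂ t, iteratedDeriv k (fun y => breather α β x₁ x₂ y t) 0 =
      F (x₁ + (α ^ 2 - 3 * β ^ 2) * t, x₂ + (3 * α ^ 2 - β ^ 2) * t) := by
    intro x₁ x₂ t
    simp only [breather_eq]
    rw [hFk]
    simp
  refine ⟨C, hC, fun x₁ x₂ t => ?_⟩
  simp only [hB]
  rw [deriv_comp_add_const (f := fun a => F (a, _)), deriv_comp_add_const (f := fun b => F (_, b))]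
  exact hCF _ _

theorem div_cosh_le_of_le {C β v w : ℝ} (hC : 0 ≤ C) (hβ : 0 ≤ β) (hw : w ≤ v) :
    C / cosh (β * v) ≤ 2 * C * exp (-(β * w)) := by
  have hcosh : exp (β * w) ≤ 2 * cosh (β * v) := by
    rw [cosh_eq]
    linarith [exp_le_exp.2 (mul_le_mul_of_nonneg_left hw hβ), exp_pos (-(β * v))]
  rw [div_le_iff₀ (cosh_pos _), exp_neg]
  calc C = 2 * C * (exp (β * w))⁻¹ * (exp (β * w) / 2) := by field_simp
    _ ≤ 2 * C * (exp (β * w))⁻¹ * cosh (β * v) := by gcongr; linarith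

theorem breather_boundary_values_small_general (α β : ℝ) (hβ : 0 < β)
    (hlv : β < Real.sqrt 3 * α) :
    ∃ C > (0:ℝ), ∀ L > (0:ℝ), ∀ t ≥ (0:ℝ), ∀ ρ₁ : ℝ, ∀ ρ₂ ∈ Set.Ioo (-(L/2)) (L/2),
      ∀ k ≤ 3,
        |deriv (fun a => iteratedDeriv k (fun y => breather α β a (ρ₂ + L) y t) 0) ρ₁| ≤
          C * Real.exp (-β * L / 2) ∧
        |deriv (fun a => iteratedDeriv k (fun y => breather α β ρ₁ a y t) 0) (ρ₂ + L)| ≤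
          C * Real.exp (-β * L / 2) := by
  have hγ : 0 < 3 * α ^ 2 - β ^ 2 := by
    nlinarith [mul_pos (sub_pos.2 hlv) (hβ.trans hlv), sq_sqrt (show (0:ℝ) ≤ 3 by norm_num)]
  choose C hC₀ hC using exists_abs_deriv_iteratedDeriv_breather_le α β
  set S := ∑ k ∈ Finset.range 4, C k
  refine ⟨2 * S, mul_pos two_pos (Finset.sum_pos (fun i _ => hC₀ i) ⟨0, by simp⟩),
    fun L _ t ht ρ₁ ρ₂ hρ k hk => ?_⟩
  have hCk : C k ≤ S :=
    Finset.single_le_sum (fun i _ => (hC₀ i).le) (Finset.mem_range.2 (by omega))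
  have hv : L / 2 ≤ ρ₂ + L + (3 * α ^ 2 - β ^ 2) * t := by
    linarith [hρ.1, mul_nonneg hγ.le ht]
  have hdecay :
      C k / cosh (β * (ρ₂ + L + (3 * α ^ 2 - β ^ 2) * t)) ≤ 2 * S * exp (-β * L / 2) := by
    calc _ ≤ 2 * C k * exp (-(β * (L / 2))) := div_cosh_le_of_le (hC₀ k).le hβ.le hv
      _ ≤ 2 * S * exp (-β * L / 2) := by rw [show -(β * (L / 2)) = -β * L / 2 by ring]; gcongr
  exact ⟨(hC k ρ₁ (ρ₂ + L) t).1.trans hdecay, (hC k ρ₁ (ρ₂ + L) t).2.trans hdecay⟩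

theorem breather_boundary_values_small (α β : ℝ) (hα : 0 < α) (hβ : 0 < β)
    (hlv : β < Real.sqrt 3 * α) :
    ∃ C > (0:ℝ), ∀ L > (0:ℝ), ∀ t ≥ (0:ℝ), ∀ ρ₁ : ℝ, ∀ ρ₂ ∈ Set.Ioo (-(L/2)) (L/2),
      ∀ k ≤ 3,
        |deriv (fun a => iteratedDeriv k (fun y => breather α β a (ρ₂ + L) y t) 0) ρ₁| ≤
          C * Real.exp (-β * L / 2) ∧
        |deriv (fun a => iteratedDeriv k (fun y => breather α β ρ₁ a y t) 0) (ρ₂ + L)| ≤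
          C * Real.exp (-β * L / 2) :=
  breather_boundary_values_small_general α β hβ hlv
end

section
/- Let α, β > 0. There exists a constant C > 0, depending only on α and β, such that for all x₁, x₂ ∈ ℝ and all (x,t) ∈ ℝ²: | ∂_x B̃_{α,β}(x,t;x₁,x₂) | ≤ C · sech(β y₂), where y₂ = x + γt + x₂ and γ = 3α² − β². -/
/-!
Clearing the `sech` factors, `B̃ = 2√2 β N / D` with `u = α y₁`, `v = β y₂`, `k = β / α`,
`N = cos u cosh v - k sin u sinh v` and `D = cosh² v + k² sin² u`. Since `v' = k u'`, the
`cos u sinh v` terms of `N'` cancel and `N' = -α (1 + k²) sin u cosh v`. Thus `N` and `N'` are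
`O(cosh v)`, `D'` is `O(cosh² v)` and `D ≥ cosh² v`, so the quotient rule gives
`(N' D - N D') / D² = O(cosh³ v / cosh⁴ v) = O(sech v)`.
-/

open Real Filter MeasureTheory

theorem abs_div_sq_sub_mul_le {f f' g g' c A A' B B' : ℝ} (hc : 0 < c) (hf : |f| ≤ A * c)
    (hf' : |f'| ≤ A' * c) (hg : c ^ 2 ≤ g) (hgB : g ≤ B * c ^ 2) (hg' : |g'| ≤ B' * c ^ 2) :
    |(f' * g - f * g') / g ^ 2| ≤ (A' * B + A * B') / c := by
  have hg0 : 0 < g := (pow_pos hc 2).trans_le hg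
  have hnum : |f' * g - f * g'| ≤ (A' * B + A * B') * c ^ 3 :=
    calc |f' * g - f * g'| ≤ |f'| * g + |f| * |g'| := by
          simpa only [abs_mul, abs_of_pos hg0] using abs_sub (f' * g) (f * g')
      _ ≤ A' * c * (B * c ^ 2) + A * c * (B' * c ^ 2) :=
          add_le_add (mul_le_mul hf' hgB hg0.le ((abs_nonneg _).trans hf'))
            (mul_le_mul hf hg' (abs_nonneg _) ((abs_nonneg _).trans hf))
      _ = (A' * B + A * B') * c ^ 3 := by ring
  have hK : 0 ≤ A' * B + A * B' :=
    le_of_mul_le_mul_right (by simpa using (abs_nonneg _).trans hnum) (pow_pos hc 3)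
  rw [abs_div, abs_of_pos (pow_pos hg0 2), div_le_div_iff₀ (pow_pos hg0 2) hc]
  calc |f' * g - f * g'| * c ≤ (A' * B + A * B') * c ^ 3 * c := by gcongr
    _ = (A' * B + A * B') * (c ^ 2) ^ 2 := by ring
    _ ≤ (A' * B + A * B') * g ^ 2 := by gcongr

theorem abs_sinh_le_cosh (z : ℝ) : |sinh z| ≤ cosh z :=
  abs_le_of_sq_le_sq (by rw [cosh_sq]; linarith) (cosh_pos z).le

noncomputable def breatherProfile (k u v : ℝ) : ℝ :=
  (cos u * cosh v - k * sin u * sinh v) / (cosh v ^ 2 + k ^ 2 * sin u ^ 2)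

theorem breather_eq_breatherProfile {α : ℝ} (hα : α ≠ 0) (β x₁ x₂ x t : ℝ) :
    breather α β x₁ x₂ x t = 2 * √2 * β * breatherProfile (β / α)
      (α * (x + (α^2 - 3*β^2)*t + x₁)) (β * (x + (3*α^2 - β^2)*t + x₂)) := by
  have := (cosh_pos (β * (x + (3*α^2 - β^2)*t + x₂))).ne'
  simp only [breather, breatherProfile, tanh_eq_sinh_div_cosh]
  field_simp

section
variable {u v : ℝ → ℝ} {k α x : ℝ}

theorem hasDerivAt_breatherProfile_num (hu : HasDerivAt u α x) (hv : HasDerivAt v (k * α) x) :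
    HasDerivAt (fun y => cos (u y) * cosh (v y) - k * sin (u y) * sinh (v y))
      (-(α * (1 + k ^ 2)) * sin (u x) * cosh (v x)) x :=
  ((hu.cos.fun_mul hv.cosh).fun_sub ((hu.sin.const_mul k).fun_mul hv.sinh)).congr_deriv (by ring)

theorem hasDerivAt_breatherProfile_den (hu : HasDerivAt u α x) (hv : HasDerivAt v (k * α) x) :
    HasDerivAt (fun y => cosh (v y) ^ 2 + k ^ 2 * sin (u y) ^ 2)
      (2 * α * k * (cosh (v x) * sinh (v x) + k * sin (u x) * cos (u x))) x :=
  ((hv.cosh.fun_pow 2).fun_add ((hu.sin.fun_pow 2).const_mul (k ^ 2))).congr_deriv (by ring)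

theorem abs_deriv_breatherProfile_le (hα : 0 ≤ α) (hk : 0 ≤ k) (hu : HasDerivAt u α x)
    (hv : HasDerivAt v (k * α) x) :
    |deriv (fun y => breatherProfile k (u y) (v y)) x| ≤
      α * ((1 + k ^ 2) ^ 2 + 2 * k * (1 + k) ^ 2) / cosh (v x) := by
  have hch : 1 ≤ cosh (v x) := one_le_cosh _
  have hsh := abs_sinh_le_cosh (v x)
  have hs := abs_sin_le_one (u x)
  have hc := abs_cos_le_one (u x)
  have hs2 := sin_sq_le_one (u x)
  have hch2 : 1 ≤ cosh (v x) ^ 2 := one_le_pow₀ hch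
  have hD : HasDerivAt (fun y => breatherProfile k (u y) (v y)) _ x :=
    (hasDerivAt_breatherProfile_num hu hv).fun_div (hasDerivAt_breatherProfile_den hu hv)
      (add_pos_of_pos_of_nonneg (pow_pos (cosh_pos _) 2) (by positivity)).ne'
  rw [hD.deriv]
  refine (abs_div_sq_sub_mul_le (cosh_pos (v x)) (A := 1 + k) (A' := α * (1 + k ^ 2))
    (B := 1 + k ^ 2) (B' := 2 * α * k * (1 + k)) ?_ ?_ ?_ ?_ ?_).trans_eq (by ring)
  · calc _ ≤ |cos (u x)| * cosh (v x) + k * |sin (u x)| * |sinh (v x)| := by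
          simpa only [abs_mul, abs_of_nonneg hk, abs_of_pos (cosh_pos (v x))] using
            abs_sub (cos (u x) * cosh (v x)) (k * sin (u x) * sinh (v x))
      _ ≤ 1 * cosh (v x) + k * 1 * cosh (v x) := by gcongr
      _ = (1 + k) * cosh (v x) := by ring
  · rw [abs_mul, abs_mul, abs_neg, abs_of_nonneg (by positivity), abs_of_pos (cosh_pos (v x))]
    exact mul_le_mul_of_nonneg_right (mul_le_of_le_one_right (by positivity) hs) (by positivity)
  · exact le_add_of_nonneg_right (by positivity)
  · nlinarith [mul_le_mul_of_nonneg_left hs2 (sq_nonneg k),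
      mul_le_mul_of_nonneg_left hch2 (sq_nonneg k)]
  · rw [abs_mul, abs_of_nonneg (by positivity)]
    calc _ ≤ 2 * α * k * (cosh (v x) * |sinh (v x)| + k * |sin (u x)| * |cos (u x)|) := by
          gcongr
          simpa only [abs_mul, abs_of_nonneg hk, abs_of_pos (cosh_pos (v x))] using
            abs_add_le (cosh (v x) * sinh (v x)) (k * sin (u x) * cos (u x))
      _ ≤ 2 * α * k * (cosh (v x) * cosh (v x) + k * 1 * 1) := by gcongr
      _ ≤ 2 * α * k * (1 + k) * cosh (v x) ^ 2 := by
          nlinarith [mul_le_mul_of_nonneg_left hch2 (by positivity : 0 ≤ 2 * α * k * k)]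
end

theorem breather_x_derivative_sech_bound (α β : ℝ) (hα : 0 < α) (hβ : 0 < β) :
    ∃ C > (0:ℝ), ∀ x₁ x₂ x t : ℝ,
      |deriv (fun y => breather α β x₁ x₂ y t) x| ≤
        C * (1 / Real.cosh (β * (x + (3*α^2 - β^2)*t + x₂))) := by
  refine ⟨2 * √2 * β * (α * ((1 + (β / α) ^ 2) ^ 2 + 2 * (β / α) * (1 + β / α) ^ 2)),
    by positivity, fun x₁ x₂ x t => ?_⟩
  have hu : HasDerivAt (fun y => α * (y + (α^2 - 3*β^2)*t + x₁)) α x := by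
    simpa using (((hasDerivAt_id x).add_const _).add_const x₁).const_mul α
  have hv : HasDerivAt (fun y => β * (y + (3*α^2 - β^2)*t + x₂)) (β / α * α) x := by
    simpa [div_mul_cancel₀ β hα.ne'] using
      (((hasDerivAt_id x).add_const _).add_const x₂).const_mul β
  simp only [breather_eq_breatherProfile hα.ne', deriv_const_mul_field, abs_mul,
    abs_of_pos (by positivity : 0 < 2 * √2 * β), mul_one_div]
  rw [mul_div_assoc]
  gcongr
  exact abs_deriv_breatherProfile_le hα.le (by positivity) hu hv
end
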